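/- arXiv:1401.2692 — 6 statements merged into one kernel-verified Lean document; each statement's English description precedes it below -/
import Mathlib

section
/- Let K ≥ 2 and let α : Fin K → Fin K → ℝ be nonnegative channel strengths (no TIN-optimality condition is required). Then every cyclic partition bound is valid: for every d in the TIN region D(α) and every permutation σ of Fin K, ∑_k d k ≤ ∑_k α k k − ∑_k c σ k, where c σ k = α (σ k) k if σ k ≠ k and c σ k = 0 if σ k = k. -/
open scoped BigOperators

/-- The TIN region for channel strengths `α`: nonnegative tuples satisfying
all singleton-cycle and cycle constraints. -/
def tinRegion {K : ℕ} (α : Fin K → Fin K → ℝ) : Set (Fin K → ℝ) :=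
  {d | (∀ k, 0 ≤ d k) ∧ (∀ k, d k ≤ α k k) ∧
    ∀ σ : Equiv.Perm (Fin K), σ.IsCycle →
      ∑ k ∈ σ.support, d k ≤ ∑ k ∈ σ.support, (α k k - α (σ k) k)}

/-- The cost of the cyclic partition corresponding to the permutation `σ`. -/
noncomputable def cycCost {K : ℕ} (α : Fin K → Fin K → ℝ)
    (σ : Equiv.Perm (Fin K)) : ℝ :=
  ∑ k, if σ k = k then 0 else α (σ k) k

/-- Every cyclic partition bound is a valid outer bound on the coordinate sum
over the TIN region (no TIN-optimality condition is needed). -/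
theorem cyclic_partition_bound_valid
    (K : ℕ) (hK : 2 ≤ K) (α : Fin K → Fin K → ℝ)
    (hpos : ∀ i j, 0 ≤ α i j)
    (d : Fin K → ℝ) (hd : d ∈ tinRegion α) (σ : Equiv.Perm (Fin K)) :
    ∑ k, d k ≤ ∑ k, α k k - cycCost α σ := by
  obtain ⟨hd0, hd1, hd2⟩ := hd
  -- support as biUnion of cycle factor supports
  have hsupp : σ.support = σ.cycleFactorsFinset.biUnion Equiv.Perm.support := by
    ext x
    rw [Finset.mem_biUnion]
    exact Equiv.Perm.mem_support_iff_mem_support_of_mem_cycleFactorsFinset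
  have hdisj : (σ.cycleFactorsFinset : Set (Equiv.Perm (Fin K))).PairwiseDisjoint
      Equiv.Perm.support := by
    intro a ha b hb hab
    exact Equiv.Perm.Disjoint.disjoint_support
      ((σ.cycleFactorsFinset_pairwise_disjoint ha hb hab))
  -- sum over support bound
  have hsum : ∑ k ∈ σ.support, d k ≤ ∑ k ∈ σ.support, (α k k - α (σ k) k) := by
    rw [hsupp, Finset.sum_biUnion hdisj, Finset.sum_biUnion hdisj]
    apply Finset.sum_le_sum
    intro c hc
    obtain ⟨hcyc, happ⟩ := Equiv.Perm.mem_cycleFactorsFinset_iff.mp hc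
    calc ∑ k ∈ c.support, d k ≤ ∑ k ∈ c.support, (α k k - α (c k) k) := hd2 c hcyc
      _ = ∑ k ∈ c.support, (α k k - α (σ k) k) := by
          apply Finset.sum_congr rfl
          intro k hk
          rw [happ k hk]
  -- rewrite RHS
  have hR : ∑ k, α k k - cycCost α σ
      = ∑ k ∈ σ.support, (α k k - α (σ k) k) + ∑ k ∈ σ.supportᶜ, α k k := by
    rw [cycCost]
    rw [← Finset.sum_add_sum_compl σ.support (fun k => α k k),
        ← Finset.sum_add_sum_compl σ.support (fun k => if σ k = k then (0:ℝ) else α (σ k) k)]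
    have h1 : ∑ k ∈ σ.support, (if σ k = k then (0:ℝ) else α (σ k) k)
        = ∑ k ∈ σ.support, α (σ k) k := by
      apply Finset.sum_congr rfl
      intro k hk
      rw [if_neg (Equiv.Perm.mem_support.mp hk)]
    have h2 : ∑ k ∈ σ.supportᶜ, (if σ k = k then (0:ℝ) else α (σ k) k) = 0 := by
      apply Finset.sum_eq_zero
      intro k hk
      simp only [Finset.mem_compl, Equiv.Perm.mem_support, not_not] at hk
      rw [if_pos hk]
    rw [h1, h2, Finset.sum_sub_distrib]
    ring
  rw [hR, ← Finset.sum_add_sum_compl σ.support d]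
  exact add_le_add hsum (Finset.sum_le_sum fun k _ => hd1 k)
end

section
/- Let K ≥ 2 and let α : Fin K → Fin K → ℝ be nonnegative channel strengths satisfying the strict TIN-optimality condition: for every i, α i i > (max over j ≠ i of α j i) + (max over k ≠ i of α i k). If d is in the TIN region D(α) and d i = 0 for some i, then the tuple d′ obtained from d by replacing the i-th coordinate with α i i − (max over j ≠ i of α j i) − (max over k ≠ i of α i k) (a strictly positive number) is again in D(α); in particular d′ has strictly larger coordinate sum than d. -/
open scoped BigOperators

/-- The maximum of `g j` over all `j ≠ i`, expressed as a supremum over the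
(finite, and for `K ≥ 2` nonempty) subtype `{j // j ≠ i}`. -/
noncomputable def maxNe {K : ℕ} (g : Fin K → ℝ) (i : Fin K) : ℝ :=
  ⨆ j : {j : Fin K // j ≠ i}, g j.1

lemma le_maxNe {K : ℕ} (g : Fin K → ℝ) (i j : Fin K) (hj : j ≠ i) :
    g j ≤ maxNe g i := by
  exact le_ciSup (f := fun j : {j : Fin K // j ≠ i} => g j.1)
    (Set.Finite.bddAbove (Set.finite_range _)) ⟨j, hj⟩

/-- Under the strict TIN-optimality condition, if `d` lies in the TIN region
and `d i = 0`, then raising the `i`-th coordinate to the strictly positive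
value `α i i - max_{j ≠ i} α j i - max_{k ≠ i} α i k` keeps the tuple in the
TIN region and strictly increases the coordinate sum. -/
theorem zero_coordinate_improvable
    (K : ℕ) (hK : 2 ≤ K) (α : Fin K → Fin K → ℝ)
    (hpos : ∀ i j, 0 ≤ α i j)
    (hstrict : ∀ i, maxNe (fun j => α j i) i + maxNe (fun k => α i k) i < α i i)
    (d : Fin K → ℝ) (hd : d ∈ tinRegion α) (i : Fin K) (hdi : d i = 0) :
    0 < α i i - maxNe (fun j => α j i) i - maxNe (fun k => α i k) i ∧
    Function.update d i
        (α i i - maxNe (fun j => α j i) i - maxNe (fun k => α i k) i)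
      ∈ tinRegion α ∧
    ∑ k, d k < ∑ k, Function.update d i
        (α i i - maxNe (fun j => α j i) i - maxNe (fun k => α i k) i) k := by
  classical
  obtain ⟨hd0, hd1, hd2⟩ := hd
  set M1 := maxNe (fun j => α j i) i with hM1
  set M2 := maxNe (fun k => α i k) i with hM2
  set v := α i i - M1 - M2 with hv
  have hv0 : 0 < v := by have := hstrict i; simp only [hv]; linarith
  -- there is some element different from i
  obtain ⟨j0, hj0⟩ : ∃ j0 : Fin K, j0 ≠ i := by
    by_cases h : i = ⟨0, by omega⟩
    · refine ⟨⟨1, by omega⟩, ?_⟩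
      subst h; simp [Fin.ext_iff]
    · exact ⟨⟨0, by omega⟩, fun hc => h hc.symm⟩
  have hM1le : ∀ j : Fin K, j ≠ i → α j i ≤ M1 := fun j hj => le_maxNe (fun j => α j i) i j hj
  have hM2le : ∀ k : Fin K, k ≠ i → α i k ≤ M2 := fun k hk => le_maxNe (fun k => α i k) i k hk
  have hM1nn : 0 ≤ M1 := le_trans (hpos j0 i) (hM1le j0 hj0)
  have hM2nn : 0 ≤ M2 := le_trans (hpos i j0) (hM2le j0 hj0)
  set d' := Function.update d i v with hd'
  have hd'i : d' i = v := Function.update_self i v d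
  have hd'ne : ∀ k, k ≠ i → d' k = d k := fun k hk => Function.update_of_ne hk v d
  refine ⟨hv0, ⟨?_, ?_, ?_⟩, ?_⟩
  · intro k
    by_cases hk : k = i
    · subst hk; rw [hd'i]; exact le_of_lt hv0
    · rw [hd'ne k hk]; exact hd0 k
  · intro k
    by_cases hk : k = i
    · subst hk; rw [hd'i]; simp only [hv]; linarith [hpos k k]
    · rw [hd'ne k hk]; exact hd1 k
  · intro σ hσ
    by_cases hiS : i ∈ σ.support
    · -- the interesting case
      have hσi : σ i ≠ i := Equiv.Perm.mem_support.mp hiS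
      set s := σ i with hs
      have hsne : s ≠ i := hσi
      have hsS : s ∈ σ.support := Equiv.Perm.apply_mem_support.mpr hiS
      -- split sum of d' over support
      have hsum1 : ∑ k ∈ σ.support, d' k = v + ∑ k ∈ σ.support.erase i, d k := by
        rw [← Finset.add_sum_erase _ _ hiS, hd'i]
        congr 1
        refine Finset.sum_congr rfl fun k hk => hd'ne k (Finset.ne_of_mem_erase hk)
      rw [hsum1]
      by_cases h2 : σ s = i
      · -- 2-cycle case: support = {i, s}
        have hsub : σ.support ⊆ {i, s} := by
          intro y hy
          have hy' : σ y ≠ y := Equiv.Perm.mem_support.mp hy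
          obtain ⟨n, hn⟩ := hσ.exists_pow_eq hσi hy'
          have key : ∀ m : ℕ, (σ ^ m) i = i ∨ (σ ^ m) i = s := by
            intro m
            induction m with
            | zero => left; simp
            | succ m ih =>
              rw [pow_succ', Equiv.Perm.mul_apply]
              rcases ih with h | h
              · right; rw [h]
              · left; rw [h, h2]
          rcases key n with h | h <;> rw [hn] at h <;> simp [h]
        have hsupeq : σ.support = {i, s} := by
          apply Finset.Subset.antisymm hsub
          intro y hy
          rcases Finset.mem_insert.mp hy with h | h
          · subst h; exact hiS
          · rw [Finset.mem_singleton.mp h]; exact hsS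
        have herase : σ.support.erase i = {s} := by
          rw [hsupeq]
          exact Finset.erase_insert (by simp [Ne.symm hsne])
        rw [herase, hsupeq, Finset.sum_singleton,
          Finset.sum_insert (by simp [Ne.symm hsne]), Finset.sum_singleton]
        have h3 : α s i ≤ M1 := hM1le s hsne
        have h4 : α i s ≤ M2 := hM2le s hsne
        have h5 : d s ≤ α s s := hd1 s
        rw [← hs, h2]
        simp only [hv]
        linarith
      · -- general case: use τ = swap i s * σ
        set p := σ⁻¹ i with hpdef
        have hpi : σ p = i := Equiv.apply_symm_apply σ i
        have hpne : p ≠ i := by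
          intro h; rw [h] at hpi; exact hσi hpi
        have hps : p ≠ s := by
          intro h; rw [h] at hpi; exact h2 hpi
        have hpS : p ∈ σ.support :=
          Equiv.Perm.mem_support.mpr (by rw [hpi]; exact Ne.symm hpne)
        set τ := Equiv.swap i s * σ with hτdef
        have hτc : τ.IsCycle := hσ.swap_mul hσi h2
        have hτp : τ p = s := by
          simp only [hτdef, Equiv.Perm.mul_apply, hpi, Equiv.swap_apply_left]
        have hτi : τ i = i := by
          simp only [hτdef, Equiv.Perm.mul_apply, ← hs, Equiv.swap_apply_right]
        have hτk : ∀ k, k ≠ i → k ≠ p → τ k = σ k := by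
          intro k hki hkp
          have ha : σ k ≠ i := fun h => hkp (by rw [← hpi] at h; exact σ.injective h)
          have hb : σ k ≠ s := fun h => hki (σ.injective (by rw [h, hs]))
          simp only [hτdef, Equiv.Perm.mul_apply]
          exact Equiv.swap_apply_of_ne_of_ne ha hb
        have hsupτ : τ.support = σ.support.erase i := by
          ext k
          simp only [Finset.mem_erase, Equiv.Perm.mem_support]
          constructor
          · intro hk
            have hki : k ≠ i := fun h => hk (by rw [h, hτi])
            refine ⟨hki, ?_⟩
            by_cases hkp : k = p
            · subst hkp; rw [hpi]; exact Ne.symm hpne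
            · intro h
              exact hk (by rw [hτk k hki hkp, h])
          · rintro ⟨hki, hk⟩
            by_cases hkp : k = p
            · subst hkp; rw [hτp]; exact Ne.symm hps
            · rw [hτk k hki hkp]; exact hk
        have hcons : ∑ k ∈ σ.support.erase i, d k ≤
            ∑ k ∈ σ.support.erase i, (α k k - α (τ k) k) := by
          rw [← hsupτ]; exact hd2 τ hτc
        have hpE : p ∈ σ.support.erase i := Finset.mem_erase.mpr ⟨hpne, hpS⟩
        have hsplitF : ∑ k ∈ σ.support, (α k k - α (σ k) k)
            = (α i i - α (σ i) i) + ((α p p - α (σ p) p)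
              + ∑ k ∈ (σ.support.erase i).erase p, (α k k - α (σ k) k)) := by
          rw [← Finset.add_sum_erase _ _ hiS, ← Finset.add_sum_erase _ _ hpE]
        have hsplitG : ∑ k ∈ σ.support.erase i, (α k k - α (τ k) k)
            = (α p p - α (τ p) p)
              + ∑ k ∈ (σ.support.erase i).erase p, (α k k - α (τ k) k) := by
          rw [← Finset.add_sum_erase _ _ hpE]
        have hrest : ∑ k ∈ (σ.support.erase i).erase p, (α k k - α (τ k) k)
            = ∑ k ∈ (σ.support.erase i).erase p, (α k k - α (σ k) k) := by
          refine Finset.sum_congr rfl fun k hk => ?_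
          rw [hτk k (Finset.ne_of_mem_erase (Finset.mem_of_mem_erase hk))
            (Finset.ne_of_mem_erase hk)]
        have h3 : α s i ≤ M1 := hM1le s hsne
        have h4 : α i p ≤ M2 := hM2le p hpne
        have h5 : 0 ≤ α s p := hpos s p
        rw [hsplitF, ← hs, hpi]
        rw [hsplitG, hrest, hτp] at hcons
        simp only [hv]
        linarith
    · -- i not in support: sums agree
      have : ∑ k ∈ σ.support, d' k = ∑ k ∈ σ.support, d k :=
        Finset.sum_congr rfl fun k hk => hd'ne k (by rintro rfl; exact hiS hk)
      rw [this]; exact hd2 σ hσ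
  · -- strict sum increase
    have h1 : ∑ k, d' k = v + ∑ k ∈ Finset.univ.erase i, d k := by
      rw [← Finset.add_sum_erase _ _ (Finset.mem_univ i), hd'i]
      congr 1
      refine Finset.sum_congr rfl fun k hk => hd'ne k (Finset.ne_of_mem_erase hk)
    have h2 : ∑ k, d k = d i + ∑ k ∈ Finset.univ.erase i, d k :=
      (Finset.add_sum_erase _ _ (Finset.mem_univ i)).symm
    rw [h1, h2, hdi]
    linarith
end

section
/- Let K ≥ 1 and let D_u ⊆ ℝ^K be a closed convex set, and let D = D_u ∩ ℝ^K_+, where ℝ^K_+ is the set of tuples with all coordinates nonnegative. Suppose the supremum S of ∑_{k} d k over d ∈ D is finite and is attained at some tuple d* ∈ D with d*_k > 0 for every k. Then ∑_k d k ≤ S for every d ∈ D_u; in particular the supremum of the coordinate sum over D_u equals S. -/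
open scoped BigOperators

/-- Lemma 2 of the paper: let `Du ⊆ ℝ^K` be closed and convex and let
`D = Du ∩ ℝ^K_+`. If the supremum `S` of the coordinate sum over `D` is finite
and attained at a tuple `dstar ∈ D` with all coordinates strictly positive,
then `S` also bounds the coordinate sum over all of `Du`; in particular the
supremum of the coordinate sum over `Du` equals `S`. -/
theorem drop_nonnegativity_constraints
    (K : ℕ) (hK : 1 ≤ K)
    (Du : Set (Fin K → ℝ)) (hclosed : IsClosed Du) (hconv : Convex ℝ Du)
    (D : Set (Fin K → ℝ)) (hD : D = Du ∩ {d | ∀ k, 0 ≤ d k})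
    (S : ℝ) (dstar : Fin K → ℝ)
    (hmem : dstar ∈ D) (hposd : ∀ k, 0 < dstar k)
    (hsum : ∑ k, dstar k = S)
    (hub : ∀ d ∈ D, ∑ k, d k ≤ S) :
    (∀ d ∈ Du, ∑ k, d k ≤ S) ∧
    sSup ((fun d => ∑ k, d k) '' Du) = S := by
  haveI : Nonempty (Fin K) := Fin.pos_iff_nonempty.mp hK
  have hdu : dstar ∈ Du := (hD ▸ hmem).1
  have main : ∀ d ∈ Du, ∑ k, d k ≤ S := by
    intro d hd
    set m : ℝ := Finset.univ.inf' Finset.univ_nonempty (fun k => dstar k) with hm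
    set M : ℝ := Finset.univ.sup' Finset.univ_nonempty (fun k => |d k|) with hM
    have hmpos : 0 < m := by
      rw [hm, Finset.lt_inf'_iff]
      exact fun k _ => hposd k
    have hMnn : 0 ≤ M := by
      obtain ⟨k⟩ := ‹Nonempty (Fin K)›
      exact le_trans (abs_nonneg (d k)) (Finset.le_sup' (fun k => |d k|) (Finset.mem_univ k))
    have hMm : 0 < M + m := by linarith
    set t : ℝ := m / (2 * (M + m)) with ht
    have htpos : 0 < t := by positivity
    have htle : t ≤ 1 / 2 := by
      rw [ht, div_le_div_iff₀ (by positivity) (by norm_num)]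
      nlinarith
    have ht1 : t ≤ 1 := by linarith
    have htMm : t * (M + m) = m / 2 := by
      rw [ht]; field_simp
    -- the convex combination
    have hcomb : t • d + (1 - t) • dstar ∈ Du :=
      hconv hd hdu (le_of_lt htpos) (by linarith) (by ring)
    have hnonneg : ∀ k, 0 ≤ (t • d + (1 - t) • dstar) k := by
      intro k
      have h1 : -M ≤ d k := by
        have := Finset.le_sup' (fun k => |d k|) (Finset.mem_univ k)
        have := abs_le.mp (le_trans (le_refl |d k|) this)
        linarith [this.1]
      have h2 : m ≤ dstar k := Finset.inf'_le _ (Finset.mem_univ k)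
      have : t * d k + (1 - t) * dstar k ≥ m - t * (M + m) := by nlinarith
      simp only [Pi.add_apply, Pi.smul_apply, smul_eq_mul]
      rw [htMm] at this
      linarith
    have hmemD : t • d + (1 - t) • dstar ∈ D := by
      rw [hD]; exact ⟨hcomb, hnonneg⟩
    have := hub _ hmemD
    have hsum' : ∑ k, (t • d + (1 - t) • dstar) k
        = t * (∑ k, d k) + (1 - t) * S := by
      simp only [Pi.add_apply, Pi.smul_apply, smul_eq_mul]
      rw [Finset.sum_add_distrib, ← Finset.mul_sum, ← Finset.mul_sum, hsum]
    rw [hsum'] at this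
    nlinarith
  refine ⟨main, le_antisymm ?_ ?_⟩
  · exact csSup_le ⟨S, ⟨dstar, hdu, hsum⟩⟩ (by rintro x ⟨d, hd, rfl⟩; exact main d hd)
  · exact le_csSup ⟨S, by rintro x ⟨d, hd, rfl⟩; exact main d hd⟩ ⟨dstar, hdu, hsum⟩
end

section
/- Let K ≥ 2. Index the cycles of the K user network as follows: a cycle is either a singleton {k} with k ∈ Fin K, or a permutation σ of Fin K that is a single cycle; user k belongs to the singleton cycle {k}, and belongs to a cyclic permutation σ iff k is in the support of σ. Suppose λ assigns a nonnegative real number to every cycle such that for each user k, the sum of λ over all cycles containing k equals 1. Define t : Fin K → Fin K → ℝ by t i j = λ({j}) if i = j, and t i j = ∑ over cyclic permutations σ with j in the support of σ and σ j = i of λ(σ), if i ≠ j. Then t is doubly stochastic: ∑_j t i j = 1 for every i and ∑_i t i j = 1 for every j. Moreover, for any nonnegative weights α : Fin K → Fin K → ℝ, the total weighted cycle cost satisfies ∑ over cyclic permutations σ of λ(σ)·(∑_{k ∈ support σ} α (σ k) k) = ∑_{i ≠ j} t i j · α i j. -/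
open scoped BigOperators Classical
open Finset

private lemma inv_mem_support' {K : ℕ} {σ : Equiv.Perm (Fin K)} {i : Fin K} :
    σ⁻¹ i ∈ σ.support ↔ i ∈ σ.support := by
  rw [← Equiv.Perm.support_inv σ, Equiv.Perm.apply_mem_support, Equiv.Perm.support_inv]

private lemma row_sum_aux {K : ℕ} (lamc : Equiv.Perm (Fin K) → ℝ) (i : Fin K) :
    ∑ j ∈ Finset.univ.erase i,
        ∑ σ ∈ Finset.univ.filter
          (fun σ : Equiv.Perm (Fin K) => σ.IsCycle ∧ j ∈ σ.support ∧ σ j = i), lamc σ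
    = ∑ σ ∈ Finset.univ.filter
        (fun σ : Equiv.Perm (Fin K) => σ.IsCycle ∧ i ∈ σ.support), lamc σ := by
  simp only [Finset.sum_filter]
  rw [Finset.sum_erase _ (by
    apply Finset.sum_eq_zero
    intro σ _
    rw [if_neg]
    rintro ⟨-, hs, he⟩
    exact (Equiv.Perm.mem_support.mp hs) he)]
  rw [Finset.sum_comm]
  refine Finset.sum_congr rfl fun σ _ => ?_
  rw [Finset.sum_eq_single (σ⁻¹ i)]
  · have h1 : σ (σ⁻¹ i) = i := σ.apply_symm_apply i
    by_cases h : σ.IsCycle ∧ i ∈ σ.support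
    · rw [if_pos ⟨h.1, inv_mem_support'.mpr h.2, h1⟩, if_pos h]
    · rw [if_neg, if_neg h]
      rintro ⟨hc, hs, -⟩
      exact h ⟨hc, inv_mem_support'.mp hs⟩
  · intro j _ hj
    rw [if_neg]
    rintro ⟨-, -, he⟩
    exact hj (by rw [← he]; exact (σ.symm_apply_apply j).symm)
  · intro h; exact absurd (Finset.mem_univ _) h

private lemma col_sum_aux {K : ℕ} (lamc : Equiv.Perm (Fin K) → ℝ) (j : Fin K) :
    ∑ i ∈ Finset.univ.erase j,
        ∑ σ ∈ Finset.univ.filter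
          (fun σ : Equiv.Perm (Fin K) => σ.IsCycle ∧ j ∈ σ.support ∧ σ j = i), lamc σ
    = ∑ σ ∈ Finset.univ.filter
        (fun σ : Equiv.Perm (Fin K) => σ.IsCycle ∧ j ∈ σ.support), lamc σ := by
  simp only [Finset.sum_filter]
  rw [Finset.sum_erase _ (by
    apply Finset.sum_eq_zero
    intro σ _
    rw [if_neg]
    rintro ⟨-, hs, he⟩
    exact (Equiv.Perm.mem_support.mp hs) he)]
  rw [Finset.sum_comm]
  refine Finset.sum_congr rfl fun σ _ => ?_
  rw [Finset.sum_eq_single (σ j)]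
  · by_cases h : σ.IsCycle ∧ j ∈ σ.support
    · rw [if_pos ⟨h.1, h.2, rfl⟩, if_pos h]
    · rw [if_neg, if_neg h]
      rintro ⟨hc, hs, -⟩
      exact h ⟨hc, hs⟩
  · intro i _ hi
    rw [if_neg]
    rintro ⟨-, -, he⟩
    exact hi he.symm
  · intro h; exact absurd (Finset.mem_univ _) h

private lemma third_aux {K : ℕ} (lamc : Equiv.Perm (Fin K) → ℝ) (α : Fin K → Fin K → ℝ) :
    ∑ σ ∈ Finset.univ.filter (fun σ : Equiv.Perm (Fin K) => σ.IsCycle),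
        lamc σ * ∑ k ∈ σ.support, α (σ k) k
      = ∑ i, ∑ j ∈ Finset.univ.erase i,
          ∑ σ ∈ Finset.univ.filter
            (fun σ : Equiv.Perm (Fin K) => σ.IsCycle ∧ j ∈ σ.support ∧ σ j = i),
            lamc σ * α i j := by
  simp only [Finset.sum_filter]
  have key : ∀ i : Fin K,
      ∑ j ∈ Finset.univ.erase i,
          ∑ σ : Equiv.Perm (Fin K),
            (if σ.IsCycle ∧ j ∈ σ.support ∧ σ j = i then lamc σ * α i j else 0)
      = ∑ j, ∑ σ : Equiv.Perm (Fin K),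
            (if σ.IsCycle ∧ j ∈ σ.support ∧ σ j = i then lamc σ * α i j else 0) := by
    intro i
    apply Finset.sum_erase
    apply Finset.sum_eq_zero
    intro σ _
    rw [if_neg]
    rintro ⟨-, hs, he⟩
    exact (Equiv.Perm.mem_support.mp hs) he
  rw [Finset.sum_congr rfl fun i _ => key i]
  rw [Finset.sum_congr rfl fun i (_ : i ∈ Finset.univ) =>
    Finset.sum_comm (s := Finset.univ) (t := Finset.univ)
      (f := fun j σ => if σ.IsCycle ∧ j ∈ σ.support ∧ σ j = i then lamc σ * α i j else 0)]
  rw [Finset.sum_comm]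
  refine Finset.sum_congr rfl fun σ _ => ?_
  by_cases hcy : σ.IsCycle
  · rw [if_pos hcy, Finset.mul_sum]
    rw [Finset.sum_comm]
    have hj : ∀ j : Fin K,
        ∑ i, (if σ.IsCycle ∧ j ∈ σ.support ∧ σ j = i then lamc σ * α i j else 0)
        = if j ∈ σ.support then lamc σ * α (σ j) j else 0 := by
      intro j
      rw [Finset.sum_eq_single (σ j)]
      · by_cases hs : j ∈ σ.support
        · rw [if_pos ⟨hcy, hs, rfl⟩, if_pos hs]
        · rw [if_neg, if_neg hs]
          rintro ⟨-, hs2, -⟩; exact hs hs2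
      · intro i _ hi
        rw [if_neg]
        rintro ⟨-, -, he⟩; exact hi he.symm
      · intro h; exact absurd (Finset.mem_univ _) h
    rw [Finset.sum_congr rfl fun j _ => hj j]
    rw [Finset.sum_ite_mem]
    rw [Finset.univ_inter]
  · rw [if_neg hcy]
    symm
    apply Finset.sum_eq_zero; intro i _
    apply Finset.sum_eq_zero; intro j _
    rw [if_neg]; rintro ⟨h, -, -⟩; exact hcy h

/-- From cycle multipliers to a doubly stochastic matrix of edge multipliers.
Cycles are either singletons `{k}` (with multiplier `lam0 k`) or cyclic
permutations `σ` of `Fin K` (with multiplier `lamc σ`); user `k` belongs to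
the singleton `{k}` and to a cyclic permutation `σ` iff `k ∈ σ.support`.
If the multipliers are nonnegative and, for every user `k`, the multipliers of
all cycles containing `k` sum to `1`, then the edge multipliers
`t i j = lam0 j` (if `i = j`) and
`t i j = ∑_{σ cyclic, j ∈ support σ, σ j = i} lamc σ` (if `i ≠ j`)
form a doubly stochastic matrix, and for any nonnegative weights `α` the total
weighted cycle cost `∑_σ lamc σ · w(σ)` equals `∑_{i ≠ j} t i j · α i j`. -/
theorem cycle_multipliers_to_doubly_stochastic
    (K : ℕ) (hK : 2 ≤ K)
    (lam0 : Fin K → ℝ) (lamc : Equiv.Perm (Fin K) → ℝ)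
    (h0 : ∀ k, 0 ≤ lam0 k) (hc : ∀ σ, 0 ≤ lamc σ)
    (hcover : ∀ k, lam0 k
        + ∑ σ ∈ Finset.univ.filter
            (fun σ : Equiv.Perm (Fin K) => σ.IsCycle ∧ k ∈ σ.support), lamc σ
        = 1)
    (t : Fin K → Fin K → ℝ)
    (ht : ∀ i j, t i j = if i = j then lam0 j
        else ∑ σ ∈ Finset.univ.filter
            (fun σ : Equiv.Perm (Fin K) =>
              σ.IsCycle ∧ j ∈ σ.support ∧ σ j = i), lamc σ) :
    (∀ i, ∑ j, t i j = 1) ∧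
    (∀ j, ∑ i, t i j = 1) ∧
    ∀ α : Fin K → Fin K → ℝ, (∀ i j, 0 ≤ α i j) →
      ∑ σ ∈ Finset.univ.filter (fun σ : Equiv.Perm (Fin K) => σ.IsCycle),
          lamc σ * ∑ k ∈ σ.support, α (σ k) k
        = ∑ i, ∑ j ∈ Finset.univ.erase i, t i j * α i j := by
  refine ⟨?_, ?_, ?_⟩
  · intro i
    rw [← Finset.add_sum_erase Finset.univ (t i) (Finset.mem_univ i)]
    have h1 : t i i = lam0 i := by rw [ht]; simp
    have h2 : ∑ j ∈ Finset.univ.erase i, t i j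
        = ∑ σ ∈ Finset.univ.filter
            (fun σ : Equiv.Perm (Fin K) => σ.IsCycle ∧ i ∈ σ.support), lamc σ := by
      rw [Finset.sum_congr rfl fun j hj => by
        rw [ht i j, if_neg (Ne.symm (Finset.ne_of_mem_erase hj))]]
      exact row_sum_aux lamc i
    rw [h1, h2, hcover i]
  · intro j
    rw [← Finset.add_sum_erase Finset.univ (fun i => t i j) (Finset.mem_univ j)]
    have h1 : t j j = lam0 j := by rw [ht]; simp
    have h2 : ∑ i ∈ Finset.univ.erase j, t i j
        = ∑ σ ∈ Finset.univ.filter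
            (fun σ : Equiv.Perm (Fin K) => σ.IsCycle ∧ j ∈ σ.support), lamc σ := by
      rw [Finset.sum_congr rfl fun i hi => by
        rw [ht i j, if_neg (Finset.ne_of_mem_erase hi)]]
      exact col_sum_aux lamc j
    rw [h1, h2, hcover j]
  · intro α _
    rw [third_aux lamc α]
    refine Finset.sum_congr rfl fun i _ => Finset.sum_congr rfl fun j hj => ?_
    rw [ht i j, if_neg (Ne.symm (Finset.ne_of_mem_erase hj)), Finset.sum_mul]
end

section
/- Let K ≥ 2, let π be a permutation of Fin K, and let M be a real K × K matrix such that M (π i) i = 1 for every i and |M j i| ≤ ε for every i and every j ≠ π i, where ε > 0 satisfies ε² < 1/(2K³). Then for every vector x ∈ ℝ^K with Euclidean norm ‖x‖ = 1, the Euclidean norm of M x satisfies ‖M x‖ > ε. -/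
open scoped BigOperators

set_option maxHeartbeats 1000000 in
/-- If the `K × K` real matrix `M` has entries `M (π i) i = 1` for a
permutation `π` and all its other entries are at most `ε` in absolute value,
where `0 < ε` and `ε² < 1/(2K³)`, then `‖M x‖ > ε` for every unit vector `x`
(Euclidean norm). -/
theorem smallest_singular_value_bound
    (K : ℕ) (hK : 2 ≤ K) (π : Equiv.Perm (Fin K))
    (M : Matrix (Fin K) (Fin K) ℝ) (ε : ℝ) (hε : 0 < ε)
    (hε2 : ε ^ 2 < 1 / (2 * (K : ℝ) ^ 3))
    (hone : ∀ i, M (π i) i = 1)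
    (hoff : ∀ i j, j ≠ π i → |M j i| ≤ ε) :
    ∀ x : EuclideanSpace ℝ (Fin K), ‖x‖ = 1 →
      ε < ‖(EuclideanSpace.equiv (Fin K) ℝ).symm
            (M.mulVec (EuclideanSpace.equiv (Fin K) ℝ x))‖ := by
  intro x hx
  have hKpos : (0:ℝ) < K := by positivity
  -- sum of squares of x is 1
  have hsum : ∑ k, x k ^ 2 = 1 := by
    have := EuclideanSpace.norm_eq x
    rw [hx] at this
    have h1 : Real.sqrt (∑ k, ‖x k‖ ^ 2) = 1 := this.symm
    have := congrArg (· ^ 2) h1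
    simp only [Real.sq_sqrt (by positivity : (0:ℝ) ≤ ∑ k, ‖x k‖ ^ 2)] at this
    simpa [Real.norm_eq_abs, sq_abs] using this
  -- there is a coordinate with x i ^ 2 ≥ 1/K
  have hex : ∃ i, 1 / (K:ℝ) ≤ x i ^ 2 := by
    by_contra h
    push_neg at h
    have hne : (Finset.univ : Finset (Fin K)).Nonempty := by
      rw [Finset.univ_nonempty_iff]
      exact Fin.pos_iff_nonempty.mp (by omega)
    have h2 : ∑ k, x k ^ 2 < ∑ _k : Fin K, 1 / (K:ℝ) :=
      Finset.sum_lt_sum_of_nonempty hne (fun k _ => h k)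
    rw [hsum, Finset.sum_const, Finset.card_univ, Fintype.card_fin, nsmul_eq_mul, mul_one_div,
      div_self (ne_of_gt hKpos)] at h2
    exact lt_irrefl _ h2
  obtain ⟨i, hi⟩ := hex
  set S : ℝ := ∑ k, |x k| with hS
  have hSnonneg : 0 ≤ S := Finset.sum_nonneg fun k _ => abs_nonneg _
  have hS2 : S ^ 2 ≤ (K:ℝ) := by
    have := sq_sum_le_card_mul_sum_sq (s := Finset.univ) (f := fun k => |x k|)
    simp only [sq_abs] at this
    calc S ^ 2 ≤ (Finset.univ.card : ℝ) * ∑ k, x k ^ 2 := by exact_mod_cast this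
    _ = (K:ℝ) := by rw [hsum]; simp
  -- the key coordinate of M x
  set y : Fin K → ℝ := M.mulVec (EuclideanSpace.equiv (Fin K) ℝ x) with hy
  have hyval : y (π i) = x i + ∑ k ∈ Finset.univ.erase i, M (π i) k * x k := by
    rw [hy, Matrix.mulVec]
    have : (EuclideanSpace.equiv (Fin K) ℝ x) = fun k => x k := rfl
    simp only [this, dotProduct]
    rw [← Finset.add_sum_erase _ _ (Finset.mem_univ i), hone i, one_mul]
  have hrest : |∑ k ∈ Finset.univ.erase i, M (π i) k * x k| ≤ ε * S := by
    calc |∑ k ∈ Finset.univ.erase i, M (π i) k * x k|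
        ≤ ∑ k ∈ Finset.univ.erase i, |M (π i) k * x k| := Finset.abs_sum_le_sum_abs _ _
      _ ≤ ∑ k ∈ Finset.univ.erase i, ε * |x k| := by
          apply Finset.sum_le_sum
          intro k hk
          rw [abs_mul]
          apply mul_le_mul_of_nonneg_right _ (abs_nonneg _)
          apply hoff k (π i)
          intro hcontra
          exact (Finset.mem_erase.mp hk).1 (π.injective hcontra).symm
      _ ≤ ∑ k, ε * |x k| := by
          apply Finset.sum_le_sum_of_subset_of_nonneg (Finset.erase_subset _ _)
          intro k _ _; positivity
      _ = ε * S := by rw [← Finset.mul_sum]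
  -- key inequality : ε * (1 + S) < |x i|
  have hkey : ε * (1 + S) < |x i| := by
    have h1 : (ε * (1 + S)) ^ 2 < 1 / (K:ℝ) := by
      have e1 : (ε * (1 + S)) ^ 2 = ε ^ 2 * (1 + S) ^ 2 := by ring
      have e2 : (1 + S) ^ 2 ≤ 2 * (1 + S ^ 2) := by nlinarith [sq_nonneg (1 - S)]
      have e3 : (1 + S) ^ 2 ≤ 2 * (1 + (K:ℝ)) := by nlinarith
      have hKK : (1:ℝ) + (K:ℝ) ≤ (K:ℝ)^2 := by
        have : (2:ℝ) ≤ (K:ℝ) := by exact_mod_cast hK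
        nlinarith
      calc (ε * (1 + S)) ^ 2 ≤ ε ^ 2 * (2 * (1 + (K:ℝ))) := by nlinarith [sq_nonneg ε]
        _ < (1 / (2 * (K:ℝ)^3)) * (2 * (1 + (K:ℝ))) := by
            apply mul_lt_mul_of_pos_right hε2
            positivity
        _ ≤ 1 / (K:ℝ) := by
            rw [div_mul_eq_mul_div, div_le_div_iff₀ (by positivity) hKpos]
            nlinarith
    have h2 : (ε * (1 + S)) ^ 2 < x i ^ 2 := lt_of_lt_of_le h1 hi
    have h3 : (ε * (1 + S)) ^ 2 < |x i| ^ 2 := by rwa [sq_abs]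
    have hnn : 0 ≤ ε * (1 + S) := by positivity
    nlinarith [abs_nonneg (x i)]
  -- |y (π i)| > ε
  have hyge : ε < |y (π i)| := by
    have : |x i| - ε * S ≤ |y (π i)| := by
      rw [hyval]
      have := abs_sub_abs_le_abs_sub (x i) (-(∑ k ∈ Finset.univ.erase i, M (π i) k * x k))
      simp only [abs_neg, sub_neg_eq_add] at this
      linarith [hrest, this]
    nlinarith
  -- conclude
  have hnorm : |y (π i)| ≤ ‖(EuclideanSpace.equiv (Fin K) ℝ).symm y‖ := by
    rw [EuclideanSpace.norm_eq]
    have : |y (π i)| = Real.sqrt (y (π i) ^ 2) := by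
      rw [Real.sqrt_sq_eq_abs]
    rw [this]
    apply Real.sqrt_le_sqrt
    have : y (π i) ^ 2 ≤ ∑ k, ‖((EuclideanSpace.equiv (Fin K) ℝ).symm y) k‖ ^ 2 := by
      have h4 : ∀ k, ((EuclideanSpace.equiv (Fin K) ℝ).symm y) k = y k := fun k => rfl
      simp only [h4, Real.norm_eq_abs, sq_abs]
      exact Finset.single_le_sum (f := fun k => y k ^ 2) (fun k _ => sq_nonneg _)
        (Finset.mem_univ (π i))
    exact this
  exact lt_of_lt_of_le hyge hnorm
end

section
/- Fix ε with 0 < ε < 1/4. Let D1 ⊆ ℝ³ be the set of tuples (d1, d2, d3) with all coordinates nonnegative satisfying d_i ≤ 1 for all i, d_i + d_j ≤ 3/2 for all i ≠ j, and d1 + d2 + d3 ≤ 3/2; let D2 ⊆ ℝ³ be the set of tuples with all coordinates nonnegative satisfying d_i ≤ 1 for all i, d_i + d_j ≤ 1 + ε for all i ≠ j, and d1 + d2 + d3 ≤ 3/2. Then the point (2, 1/2, 1/2) satisfies all of the combined sum bounds — each coordinate is at most 2, each pairwise sum is at most 5/2 + ε, and the total sum is at most 3 — yet (2, 1/2, 1/2)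 does not belong to the Minkowski sum D1 + D2, i.e. there exist no d ∈ D1 and d′ ∈ D2 with d + d′ = (2, 1/2, 1/2). -/
open scoped BigOperators Pointwise

/-- The GDoF region of the first sub-channel (all links of strength discussed
in the paper): nonnegative tuples with `d i ≤ 1`, pairwise sums at most `3/2`,
and total sum at most `3/2`. -/
def subchannelRegion1 : Set (Fin 3 → ℝ) :=
  {d | (∀ i, 0 ≤ d i) ∧ (∀ i, d i ≤ 1) ∧
    (∀ i j, i ≠ j → d i + d j ≤ 3 / 2) ∧ d 0 + d 1 + d 2 ≤ 3 / 2}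

/-- The GDoF region of the second sub-channel: nonnegative tuples with
`d i ≤ 1`, pairwise sums at most `1 + ε`, and total sum at most `3/2`. -/
def subchannelRegion2 (ε : ℝ) : Set (Fin 3 → ℝ) :=
  {d | (∀ i, 0 ≤ d i) ∧ (∀ i, d i ≤ 1) ∧
    (∀ i j, i ≠ j → d i + d j ≤ 1 + ε) ∧ d 0 + d 1 + d 2 ≤ 3 / 2}

/-- The point `(2, 1/2, 1/2)` satisfies every combined sum bound (single
coordinates at most `2`, pairwise sums at most `5/2 + ε`, total sum at most
`3`), but it is not in the Minkowski sum of the two sub-channel regions, i.e.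
it is not achievable by separate TIN over the two sub-channels. -/
theorem region_counterexample (ε : ℝ) (hε : 0 < ε) (hε4 : ε < 1 / 4) :
    (∀ i, (![2, 1/2, 1/2] : Fin 3 → ℝ) i ≤ 2) ∧
    (∀ i j, i ≠ j →
      (![2, 1/2, 1/2] : Fin 3 → ℝ) i + (![2, 1/2, 1/2] : Fin 3 → ℝ) j
        ≤ 5 / 2 + ε) ∧
    ((![2, 1/2, 1/2] : Fin 3 → ℝ) 0 + (![2, 1/2, 1/2] : Fin 3 → ℝ) 1
        + (![2, 1/2, 1/2] : Fin 3 → ℝ) 2 ≤ 3) ∧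
    (![2, 1/2, 1/2] : Fin 3 → ℝ) ∉ subchannelRegion1 + subchannelRegion2 ε := by
  refine ⟨fun i => ?_, fun i j hij => ?_, by norm_num [Matrix.cons_val_two, Matrix.head_cons, Matrix.tail_cons], ?_⟩
  · fin_cases i <;> norm_num
  · fin_cases i <;> fin_cases j <;> simp_all <;> linarith
  · rw [Set.mem_add]
    rintro ⟨d, ⟨h0, h1, h2, h3⟩, d', ⟨g0, g1, g2, g3⟩, hsum⟩
    have e0 := congrFun hsum 0
    have e1 := congrFun hsum 1
    have e2 := congrFun hsum 2
    simp [Matrix.cons_val_zero, Matrix.cons_val_one] at e0 e1 e2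
    have hd0 : d 0 = 1 := by have := h1 0; have := g1 0; linarith
    have hg0 : d' 0 = 1 := by linarith
    have hg1 : d' 1 ≤ ε := by have := g2 0 1 (by decide); linarith
    have hg2 : d' 2 ≤ ε := by have := g2 0 2 (by decide); linarith
    linarith
end
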